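/- arXiv:2001.03836 — 4 statements merged into one kernel-verified Lean document; each statement's English description precedes it below -/
import Mathlib

section
/- Let F : ℝ^D → ℝ be differentiable with M-Lipschitz gradient, let x ∈ ℝ^D be fixed, and let s be a random vector in ℝ^D satisfying E[s] = −θ∇F(x) and E[‖s‖₂²] ≤ (θ²/p)·‖∇F(x)‖₂² + c, where θ ∈ (0,1], p ∈ (0,1], and c ≥ 0. Then E[F(x + s)] ≤ F(x) − (θ − Mθ²/(2p))·‖∇F(x)‖₂² + Mc/2. In particular, if 2pθ − Mθ² > 0 (i.e., θ < 2p/M), then (2pθ − Mθ²)·‖∇F(x)‖₂² ≤ 2p·(F(x) − E[F(x + s)]) + M·p·c. -/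
/-!
Along the segment `t ↦ x + t • v` the derivative of `F` drifts from `⟪∇F x, v⟫` by at most
`M t ‖v‖²`, so `F (x + v)` differs from its linearization `F x + ⟪∇F x, v⟫` by at most
`M ‖v‖² / 2`. This makes `F (x + s)` integrable, and taking expectations turns the linear term
into `⟪∇F x, E s⟫ = -θ ‖∇F x‖²` while the second-moment bound controls the quadratic one.
-/

open MeasureTheory
open scoped NNReal InnerProductSpace

section LipschitzGradient

variable {E : Type*} [NormedAddCommGroup E] [InnerProductSpace ℝ E] [CompleteSpace E]
  {F : E → ℝ} {K : ℝ≥0}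

theorem hasDerivAt_comp_add_smul (hF : Differentiable ℝ F) (x v : E) (t : ℝ) :
    HasDerivAt (fun t : ℝ => F (x + t • v)) ⟪gradient F (x + t • v), v⟫_ℝ t := by
  have hline : HasDerivAt (fun t : ℝ => x + t • v) v t := by
    simpa using ((hasDerivAt_id t).smul_const v).const_add x
  rw [inner_gradient_left]
  exact (hF _).hasFDerivAt.comp_hasDerivAt t hline

theorem abs_sub_sub_inner_gradient_le_of_lipschitz (hF : Differentiable ℝ F)
    (hK : LipschitzWith K (gradient F)) (x v : E) :
    |F (x + v) - F x - ⟪gradient F x, v⟫_ℝ| ≤ K / 2 * ‖v‖ ^ 2 := by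
  set φ : ℝ → ℝ := fun t => F (x + t • v) - F x - t * ⟪gradient F x, v⟫_ℝ
  have hφ (t : ℝ) : HasDerivAt φ ⟪gradient F (x + t • v) - gradient F x, v⟫_ℝ t := by
    rw [inner_sub_left]
    exact ((hasDerivAt_comp_add_smul hF x v t).sub_const (F x)).fun_sub
      (hasDerivAt_mul_const _)
  have hbound (t : ℝ) : HasDerivAt (fun t => K / 2 * ‖v‖ ^ 2 * t ^ 2) (K * ‖v‖ ^ 2 * t) t :=
    ((hasDerivAt_pow 2 t).const_mul _).congr_deriv (by push_cast; ring)
  have hφ_le (t : ℝ) (ht : 0 ≤ t) :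
      ‖⟪gradient F (x + t • v) - gradient F x, v⟫_ℝ‖ ≤ K * ‖v‖ ^ 2 * t := by
    have hlip : ‖gradient F (x + t • v) - gradient F x‖ ≤ K * (t * ‖v‖) := by
      simpa [← dist_eq_norm, norm_smul, abs_of_nonneg ht] using hK.dist_le_mul (x + t • v) x
    calc ‖⟪gradient F (x + t • v) - gradient F x, v⟫_ℝ‖
        ≤ ‖gradient F (x + t • v) - gradient F x‖ * ‖v‖ := norm_inner_le_norm _ _
      _ ≤ K * (t * ‖v‖) * ‖v‖ := by gcongr
      _ = K * ‖v‖ ^ 2 * t := by ring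
  have := image_norm_le_of_norm_deriv_right_le_deriv_boundary
    (fun t _ => (hφ t).continuousAt.continuousWithinAt) (fun t _ => (hφ t).hasDerivWithinAt)
    (by simp [φ]) hbound (fun t ht => hφ_le t ht.1) (Set.right_mem_Icc.2 zero_le_one)
  simpa [φ] using this

variable {Ω : Type*} [MeasurableSpace Ω] {μ : Measure Ω} {s : Ω → E}

theorem integrable_comp_add_of_lipschitz_gradient (hF : Differentiable ℝ F)
    (hK : LipschitzWith K (gradient F)) (x : E) (hs : Integrable s μ)
    (hs_sq : Integrable (fun ω => ‖s ω‖ ^ 2) μ) [IsFiniteMeasure μ] :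
    Integrable (fun ω => F (x + s ω)) μ := by
  have hrem : Integrable (fun ω => F (x + s ω) - F x - ⟪gradient F x, s ω⟫_ℝ) μ := by
    refine (hs_sq.const_mul (K / 2)).mono' ?_ (ae_of_all _ fun ω => ?_)
    · have := hF.continuous
      have := hs.aestronglyMeasurable
      fun_prop
    · exact abs_sub_sub_inner_gradient_le_of_lipschitz hF hK x (s ω)
  refine ((hrem.fun_add (integrable_const (F x))).fun_add (hs.const_inner (gradient F x))).congr
    (ae_of_all _ fun ω => ?_)
  ring

theorem integral_comp_add_le_of_lipschitz_gradient (hF : Differentiable ℝ F)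
    (hK : LipschitzWith K (gradient F)) (x : E) (hs : Integrable s μ)
    (hs_sq : Integrable (fun ω => ‖s ω‖ ^ 2) μ) [IsProbabilityMeasure μ] :
    ∫ ω, F (x + s ω) ∂μ ≤ F x + ⟪gradient F x, ∫ ω, s ω ∂μ⟫_ℝ + K / 2 * ∫ ω, ‖s ω‖ ^ 2 ∂μ := by
  have hlin : Integrable (fun ω => F x + ⟪gradient F x, s ω⟫_ℝ) μ :=
    (integrable_const _).fun_add (hs.const_inner _)
  calc ∫ ω, F (x + s ω) ∂μ
      ≤ ∫ ω, (F x + ⟪gradient F x, s ω⟫_ℝ + K / 2 * ‖s ω‖ ^ 2) ∂μ := by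
        refine integral_mono (integrable_comp_add_of_lipschitz_gradient hF hK x hs hs_sq)
          (hlin.fun_add (hs_sq.const_mul _)) fun ω => ?_
        have := (le_abs_self _).trans (abs_sub_sub_inner_gradient_le_of_lipschitz hF hK x (s ω))
        linarith
    _ = F x + ⟪gradient F x, ∫ ω, s ω ∂μ⟫_ℝ + K / 2 * ∫ ω, ‖s ω‖ ^ 2 ∂μ := by
        rw [integral_add hlin (hs_sq.const_mul _), integral_add (integrable_const _)
          (hs.const_inner _), integral_inner hs, integral_const_mul, integral_const]
        simp

end LipschitzGradient

theorem sdm_dsgd_descent_step_general {D : ℕ} (F : EuclideanSpace ℝ (Fin D) → ℝ)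
    (M : ℝ) (hM : 0 ≤ M)
    (hF : Differentiable ℝ F) (hLip : LipschitzWith M.toNNReal (gradient F))
    (x : EuclideanSpace ℝ (Fin D))
    {Ω : Type} [MeasurableSpace Ω] (μ : Measure Ω) [IsProbabilityMeasure μ]
    (s : Ω → EuclideanSpace ℝ (Fin D))
    (θ p c : ℝ) (hp : p ∈ Set.Ioc (0 : ℝ) 1)
    (hs_int : Integrable s μ) (hs_sq : Integrable (fun ω => ‖s ω‖ ^ 2) μ)
    (hmean : ∫ ω, s ω ∂μ = -θ • gradient F x)
    (hsec : ∫ ω, ‖s ω‖ ^ 2 ∂μ ≤ θ ^ 2 / p * ‖gradient F x‖ ^ 2 + c) :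
    (∫ ω, F (x + s ω) ∂μ
        ≤ F x - (θ - M * θ ^ 2 / (2 * p)) * ‖gradient F x‖ ^ 2 + M * c / 2) ∧
    (0 < 2 * p * θ - M * θ ^ 2 →
      (2 * p * θ - M * θ ^ 2) * ‖gradient F x‖ ^ 2
        ≤ 2 * p * (F x - ∫ ω, F (x + s ω) ∂μ) + M * p * c) := by
  have hdescent := integral_comp_add_le_of_lipschitz_gradient hF hLip x hs_int hs_sq
  rw [Real.coe_toNNReal M hM, hmean, real_inner_smul_right, real_inner_self_eq_norm_sq]
    at hdescent
  have hexpected : ∫ ω, F (x + s ω) ∂μ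
      ≤ F x - (θ - M * θ ^ 2 / (2 * p)) * ‖gradient F x‖ ^ 2 + M * c / 2 :=
    calc _ ≤ F x + -θ * ‖gradient F x‖ ^ 2 + M / 2 * (θ ^ 2 / p * ‖gradient F x‖ ^ 2 + c) :=
          hdescent.trans (by gcongr)
      _ = _ := by ring
  refine ⟨hexpected, fun _ => ?_⟩
  have hp0 : 0 < p := hp.1
  calc (2 * p * θ - M * θ ^ 2) * ‖gradient F x‖ ^ 2
      = 2 * p * ((θ - M * θ ^ 2 / (2 * p)) * ‖gradient F x‖ ^ 2) := by field_simp
    _ ≤ 2 * p * (F x - ∫ ω, F (x + s ω) ∂μ + M * c / 2) := by gcongr; linarith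
    _ = 2 * p * (F x - ∫ ω, F (x + s ω) ∂μ) + M * p * c := by ring

/-- one-step descent inequality.  If `F` has `M`-Lipschitz gradient and the
random step `s` satisfies `E[s] = −θ∇F(x)` and `E‖s‖² ≤ (θ²/p)‖∇F(x)‖² + c`, then
`E[F(x+s)] ≤ F(x) − (θ − Mθ²/(2p))‖∇F(x)‖² + Mc/2`; in particular, if `2pθ − Mθ² > 0`,
then `(2pθ − Mθ²)‖∇F(x)‖² ≤ 2p(F(x) − E[F(x+s)]) + Mpc`. -/
theorem sdm_dsgd_descent_step {D : ℕ} (F : EuclideanSpace ℝ (Fin D) → ℝ)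
    (M : ℝ) (hM : 0 ≤ M)
    (hF : Differentiable ℝ F) (hLip : LipschitzWith M.toNNReal (gradient F))
    (x : EuclideanSpace ℝ (Fin D))
    {Ω : Type} [MeasurableSpace Ω] (μ : Measure Ω) [IsProbabilityMeasure μ]
    (s : Ω → EuclideanSpace ℝ (Fin D))
    (θ p c : ℝ) (hθ : θ ∈ Set.Ioc (0 : ℝ) 1) (hp : p ∈ Set.Ioc (0 : ℝ) 1) (hc : 0 ≤ c)
    (hs_int : Integrable s μ) (hs_sq : Integrable (fun ω => ‖s ω‖ ^ 2) μ)
    (hmean : ∫ ω, s ω ∂μ = -θ • gradient F x)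
    (hsec : ∫ ω, ‖s ω‖ ^ 2 ∂μ ≤ θ ^ 2 / p * ‖gradient F x‖ ^ 2 + c) :
    (∫ ω, F (x + s ω) ∂μ
        ≤ F x - (θ - M * θ ^ 2 / (2 * p)) * ‖gradient F x‖ ^ 2 + M * c / 2) ∧
    (0 < 2 * p * θ - M * θ ^ 2 →
      (2 * p * θ - M * θ ^ 2) * ‖gradient F x‖ ^ 2
        ≤ 2 * p * (F x - ∫ ω, F (x + s ω) ∂μ) + M * p * c) :=
  sdm_dsgd_descent_step_general F M hM hF hLip x μ s θ p c hp hs_int hs_sq hmean hsec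
end

section
/- Let F : ℝ^D → ℝ be differentiable with M-Lipschitz gradient and bounded below by F*. Let x₀ ∈ ℝ^D be deterministic and let (x_t)_{t≥0} be a random process with x_{t+1} = x_t + s_t, where conditionally on x_t the step s_t satisfies E[s_t | x_t] = −θ∇F(x_t) and E[‖s_t‖₂² | x_t] ≤ (θ²/p)·‖∇F(x_t)‖₂² + c, for constants θ ∈ (0,1], p ∈ (0,1], c ≥ 0 with θ < 2p/M. Then for every T ≥ 0, Σ_{t=0}^{T} E[‖∇F(x_t)‖₂²] ≤ (2p·(F(x₀) − F*) + M·p·c·(T+1)) / (2pθ − Mθ²). -/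
/-!
The descent lemma `F y ≤ F x + ⟪∇F x, y - x⟫ + (M/2)‖y - x‖²` for an `M`-smooth `F`, applied
to `x = x_t`, `y = x_{t+1}` and integrated, gives
`E F(x_{t+1}) ≤ E F(x_t) - θ E‖∇F(x_t)‖² + (M/2)(θ²/p E‖∇F(x_t)‖² + c)`:
since `∇F(x_t)` is `ℱ t`-measurable, pulling it out of the conditional expectation turns
`E⟪∇F(x_t), s_t⟫` into `-θ E‖∇F(x_t)‖²`. Summing over `t` telescopes the values of `F`, and
`F ≥ Fstar` bounds the last one. The descent lemma and `F ≥ Fstar` also sandwich `F(x_{t+1})`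
between integrable functions, which propagates integrability along the process.
-/

open MeasureTheory
open scoped NNReal RealInnerProductSpace

theorem Finset.sum_range_le_sub_add_of_le_sub_succ {g a : ℕ → ℝ} {b : ℝ}
    (h : ∀ t, g t ≤ a t - a (t + 1) + b) (n : ℕ) :
    ∑ t ∈ Finset.range n, g t ≤ a 0 - a n + n * b := by
  calc ∑ t ∈ Finset.range n, g t ≤ ∑ t ∈ Finset.range n, (a t - a (t + 1) + b) :=
        Finset.sum_le_sum fun t _ ↦ h t
    _ = a 0 - a n + n * b := by
        rw [Finset.sum_add_distrib, Finset.sum_range_sub', Finset.sum_const, Finset.card_range,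
          nsmul_eq_mul]

theorem LipschitzWith.integrable_norm_sq_comp {E E' Ω : Type*} [SeminormedAddCommGroup E]
    [SeminormedAddCommGroup E'] [MeasurableSpace Ω] {μ : Measure Ω} {K : ℝ≥0} {G : E → E'}
    (hG : LipschitzWith K G) {x x' : Ω → E} (hx' : AEStronglyMeasurable x' μ)
    (hGx : Integrable (fun ω ↦ ‖G (x ω)‖ ^ 2) μ)
    (hstep : Integrable (fun ω ↦ ‖x' ω - x ω‖ ^ 2) μ) :
    Integrable (fun ω ↦ ‖G (x' ω)‖ ^ 2) μ := by
  refine ((hGx.const_mul 2).add (hstep.const_mul (2 * K ^ 2))).mono'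
    ((hG.continuous.comp_aestronglyMeasurable hx').norm.pow 2) (ae_of_all _ fun ω ↦ ?_)
  have hle : ‖G (x' ω)‖ ≤ ‖G (x ω)‖ + K * ‖x' ω - x ω‖ := by
    have := hG.dist_le_mul (x' ω) (x ω)
    rw [dist_eq_norm, dist_eq_norm] at this
    linarith [norm_le_insert' (G (x' ω)) (G (x ω))]
  simp only [norm_pow, norm_norm, Pi.add_apply]
  nlinarith [norm_nonneg (G (x' ω)), sq_nonneg (‖G (x ω)‖ - K * ‖x' ω - x ω‖)]

variable {E : Type*} [NormedAddCommGroup E] [InnerProductSpace ℝ E]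

section Expectation

variable {Ω : Type*} {m mΩ : MeasurableSpace Ω} {μ : Measure Ω}

theorem integrable_inner_of_integrable_norm_sq {f g : Ω → E} (hf : AEStronglyMeasurable f μ)
    (hg : AEStronglyMeasurable g μ) (hf2 : Integrable (fun ω ↦ ‖f ω‖ ^ 2) μ)
    (hg2 : Integrable (fun ω ↦ ‖g ω‖ ^ 2) μ) :
    Integrable (fun ω ↦ ⟪f ω, g ω⟫) μ := by
  refine ((hf2.add hg2).div_const 2).mono' (hf.inner hg) (ae_of_all _ fun ω ↦ ?_)
  simp only [Real.norm_eq_abs, Pi.add_apply]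
  nlinarith [abs_real_inner_le_norm (f ω) (g ω), sq_nonneg (‖f ω‖ - ‖g ω‖)]

theorem integral_inner_eq_mul_of_condExp_ae_eq_smul [CompleteSpace E] (hm : m ≤ mΩ)
    [SigmaFinite (μ.trim hm)] {g s : Ω → E} (hg : StronglyMeasurable[m] g) (hs : Integrable s μ)
    (hgs : Integrable (fun ω ↦ ⟪g ω, s ω⟫) μ) {a : ℝ} (hmean : μ[s|m] =ᵐ[μ] fun ω ↦ a • g ω) :
    ∫ ω, ⟪g ω, s ω⟫ ∂μ = a * ∫ ω, ‖g ω‖ ^ 2 ∂μ := by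
  have hpull : μ[fun ω ↦ ⟪g ω, s ω⟫|m] =ᵐ[μ] fun ω ↦ ⟪g ω, (μ[s|m]) ω⟫ :=
    condExp_bilin_of_stronglyMeasurable_left (innerSL ℝ) hg hgs hs
  rw [← integral_condExp hm, ← integral_const_mul]
  refine integral_congr_ae ?_
  filter_upwards [hpull, hmean] with ω hpull hmean
  rw [hpull, hmean, inner_smul_right, real_inner_self_eq_norm_sq]

theorem integral_le_of_condExp_le (hm : m ≤ mΩ) [SigmaFinite (μ.trim hm)] {f h : Ω → ℝ}
    (hh : Integrable h μ) (hle : μ[f|m] ≤ᵐ[μ] h) : ∫ ω, f ω ∂μ ≤ ∫ ω, h ω ∂μ := by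
  rw [← integral_condExp hm]
  exact integral_mono_ae integrable_condExp hh hle

end Expectation

variable [CompleteSpace E] {F : E → ℝ} {K : ℝ≥0}

theorem Differentiable.apply_le_of_lipschitzWith_gradient (hF : Differentiable ℝ F)
    (hLip : LipschitzWith K (gradient F)) (x y : E) :
    F y ≤ F x + ⟪gradient F x, y - x⟫ + K / 2 * ‖y - x‖ ^ 2 := by
  set v := y - x
  let φ : ℝ → ℝ := fun t ↦ F (x + t • v) - t * ⟪gradient F x, v⟫ - K / 2 * t ^ 2 * ‖v‖ ^ 2
  have hφ : ∀ t, HasDerivAt φ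
      (⟪gradient F (x + t • v), v⟫ - ⟪gradient F x, v⟫ - K * t * ‖v‖ ^ 2) t := by
    intro t
    have hline : HasDerivAt (fun t : ℝ ↦ x + t • v) v t := by
      simpa using ((hasDerivAt_id t).smul_const v).const_add x
    have hFline := (hasGradientAt_iff_hasFDerivAt.mp (hF _).hasGradientAt).comp_hasDerivAt t hline
    refine ((hFline.sub ((hasDerivAt_id t).mul_const ⟪gradient F x, v⟫)).sub
      (((hasDerivAt_pow 2 t).const_mul ((K : ℝ) / 2)).mul_const (‖v‖ ^ 2))).congr_deriv ?_
    rw [InnerProductSpace.toDual_apply_apply]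
    push_cast
    ring
  have hφ' : ∀ t, 0 ≤ t →
      ⟪gradient F (x + t • v), v⟫ - ⟪gradient F x, v⟫ - K * t * ‖v‖ ^ 2 ≤ 0 := by
    intro t ht
    rw [sub_nonpos]
    have hgrad : ‖gradient F (x + t • v) - gradient F x‖ ≤ K * (t * ‖v‖) := by
      simpa [dist_eq_norm, norm_smul, abs_of_nonneg ht] using hLip.dist_le_mul (x + t • v) x
    calc ⟪gradient F (x + t • v), v⟫ - ⟪gradient F x, v⟫
        = ⟪gradient F (x + t • v) - gradient F x, v⟫ := (inner_sub_left _ _ _).symm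
      _ ≤ ‖gradient F (x + t • v) - gradient F x‖ * ‖v‖ := real_inner_le_norm _ _
      _ ≤ K * (t * ‖v‖) * ‖v‖ := by gcongr
      _ = K * t * ‖v‖ ^ 2 := by ring
  have hanti : AntitoneOn φ (Set.Ici 0) :=
    antitoneOn_of_hasDerivWithinAt_nonpos (convex_Ici 0)
      (fun t _ ↦ (hφ t).continuousAt.continuousWithinAt)
      (fun t _ ↦ (hφ t).hasDerivWithinAt)
      (fun t ht ↦ hφ' t (interior_subset ht))
  have h01 : φ 1 ≤ φ 0 := hanti Set.self_mem_Ici (Set.mem_Ici.mpr zero_le_one) zero_le_one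
  simp only [φ, one_smul, zero_smul, add_zero, one_mul, one_pow, zero_mul, sub_zero,
    add_sub_cancel, v] at h01
  linarith

section Step

variable {Ω : Type*} {m mΩ : MeasurableSpace Ω} {μ : Measure Ω} {x x' : Ω → E}

theorem integrable_comp_of_lipschitzWith_gradient [IsFiniteMeasure μ] (hF : Differentiable ℝ F)
    (hLip : LipschitzWith K (gradient F)) {Fstar : ℝ} (hbd : ∀ y, Fstar ≤ F y)
    (hx : AEStronglyMeasurable x μ) (hx' : AEStronglyMeasurable x' μ)
    (hFx : Integrable (fun ω ↦ F (x ω)) μ) (hgx : Integrable (fun ω ↦ ‖gradient F (x ω)‖ ^ 2) μ)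
    (hstep : Integrable (fun ω ↦ ‖x' ω - x ω‖ ^ 2) μ) :
    Integrable (fun ω ↦ F (x' ω)) μ := by
  have hinner : Integrable (fun ω ↦ ⟪gradient F (x ω), x' ω - x ω⟫) μ :=
    integrable_inner_of_integrable_norm_sq (hLip.continuous.comp_aestronglyMeasurable hx)
      (hx'.sub hx) hgx hstep
  exact integrable_of_le_of_le (hF.continuous.comp_aestronglyMeasurable hx')
    (ae_of_all _ fun ω ↦ hbd (x' ω))
    (ae_of_all _ fun ω ↦ hF.apply_le_of_lipschitzWith_gradient hLip (x ω) (x' ω))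
    (integrable_const Fstar) ((hFx.add hinner).add (hstep.const_mul _))

theorem integrable_norm_gradient_sq_and_comp_of_steps [IsFiniteMeasure μ]
    (hF : Differentiable ℝ F) (hLip : LipschitzWith K (gradient F)) {Fstar : ℝ}
    (hbd : ∀ y, Fstar ≤ F y) {xs : ℕ → Ω → E} (hxs : ∀ t, AEStronglyMeasurable (xs t) μ)
    (hg0 : Integrable (fun ω ↦ ‖gradient F (xs 0 ω)‖ ^ 2) μ)
    (hF0 : Integrable (fun ω ↦ F (xs 0 ω)) μ)
    (hstep : ∀ t, Integrable (fun ω ↦ ‖xs (t + 1) ω - xs t ω‖ ^ 2) μ) (t : ℕ) :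
    Integrable (fun ω ↦ ‖gradient F (xs t ω)‖ ^ 2) μ ∧ Integrable (fun ω ↦ F (xs t ω)) μ := by
  induction t with
  | zero => exact ⟨hg0, hF0⟩
  | succ t ih =>
    exact ⟨hLip.integrable_norm_sq_comp (hxs (t + 1)) ih.1 (hstep t),
      integrable_comp_of_lipschitzWith_gradient hF hLip hbd (hxs t) (hxs (t + 1)) ih.2 ih.1
        (hstep t)⟩

theorem integral_comp_le_of_condExp [IsProbabilityMeasure μ] (hF : Differentiable ℝ F)
    (hLip : LipschitzWith K (gradient F)) (hm : m ≤ mΩ) (hx : StronglyMeasurable[m] x)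
    (hx' : AEStronglyMeasurable x' μ)
    (hFx : Integrable (fun ω ↦ F (x ω)) μ) (hFx' : Integrable (fun ω ↦ F (x' ω)) μ)
    (hgx : Integrable (fun ω ↦ ‖gradient F (x ω)‖ ^ 2) μ)
    (hstep : Integrable (fun ω ↦ x' ω - x ω) μ)
    (hstep_sq : Integrable (fun ω ↦ ‖x' ω - x ω‖ ^ 2) μ) {θ a b : ℝ}
    (hmean : μ[fun ω ↦ x' ω - x ω|m] =ᵐ[μ] fun ω ↦ (-θ) • gradient F (x ω))
    (hsec : μ[fun ω ↦ ‖x' ω - x ω‖ ^ 2|m] ≤ᵐ[μ]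
      fun ω ↦ a * ‖gradient F (x ω)‖ ^ 2 + b) :
    ∫ ω, F (x' ω) ∂μ ≤ ∫ ω, F (x ω) ∂μ - θ * ∫ ω, ‖gradient F (x ω)‖ ^ 2 ∂μ
      + K / 2 * (a * ∫ ω, ‖gradient F (x ω)‖ ^ 2 ∂μ + b) := by
  have hg : StronglyMeasurable[m] fun ω ↦ gradient F (x ω) :=
    hLip.continuous.comp_stronglyMeasurable hx
  have hinner : Integrable (fun ω ↦ ⟪gradient F (x ω), x' ω - x ω⟫) μ :=
    integrable_inner_of_integrable_norm_sq (hg.mono hm).aestronglyMeasurable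
      (hx'.sub (hx.mono hm).aestronglyMeasurable) hgx hstep_sq
  have hdescent : ∫ ω, F (x' ω) ∂μ ≤ ∫ ω, F (x ω) ∂μ + ∫ ω, ⟪gradient F (x ω), x' ω - x ω⟫ ∂μ
      + K / 2 * ∫ ω, ‖x' ω - x ω‖ ^ 2 ∂μ := by
    have hFx_inner : Integrable (fun ω ↦ F (x ω) + ⟪gradient F (x ω), x' ω - x ω⟫) μ :=
      hFx.add hinner
    calc ∫ ω, F (x' ω) ∂μ
        ≤ ∫ ω, (F (x ω) + ⟪gradient F (x ω), x' ω - x ω⟫ + K / 2 * ‖x' ω - x ω‖ ^ 2) ∂μ :=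
          integral_mono hFx' (hFx_inner.add (hstep_sq.const_mul _))
            fun ω ↦ hF.apply_le_of_lipschitzWith_gradient hLip (x ω) (x' ω)
      _ = _ := by
          rw [integral_add hFx_inner (hstep_sq.const_mul _), integral_add hFx hinner,
            integral_const_mul]
  have hfirst := integral_inner_eq_mul_of_condExp_ae_eq_smul hm hg hstep hinner hmean
  have hsecond : ∫ ω, ‖x' ω - x ω‖ ^ 2 ∂μ ≤ a * ∫ ω, ‖gradient F (x ω)‖ ^ 2 ∂μ + b := by
    have hbound : Integrable (fun ω ↦ a * ‖gradient F (x ω)‖ ^ 2 + b) μ :=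
      (hgx.const_mul a).add (integrable_const b)
    have := integral_le_of_condExp_le hm hbound hsec
    rwa [integral_add (hgx.const_mul a) (integrable_const b), integral_const_mul,
      integral_const, probReal_univ, one_smul] at this
  rw [hfirst] at hdescent
  nlinarith [mul_le_mul_of_nonneg_left hsecond (by positivity : (0 : ℝ) ≤ K / 2)]

end Step

theorem sdm_dsgd_telescoped_bound_general {D : ℕ} (F : EuclideanSpace ℝ (Fin D) → ℝ)
    (M Fstar : ℝ)
    (hF : Differentiable ℝ F) (hLip : LipschitzWith M.toNNReal (gradient F))
    (hbd : ∀ y, Fstar ≤ F y)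
    {Ω : Type} [mΩ : MeasurableSpace Ω] (μ : Measure Ω) [IsProbabilityMeasure μ]
    (ℱ : ℕ → MeasurableSpace Ω) (hℱ : ∀ t, ℱ t ≤ mΩ)
    (xs : ℕ → Ω → EuclideanSpace ℝ (Fin D))
    (x₀ : EuclideanSpace ℝ (Fin D)) (hx0 : ∀ ω, xs 0 ω = x₀)
    (θ p c : ℝ) (hθ : θ ∈ Set.Ioc (0 : ℝ) 1) (hp : p ∈ Set.Ioc (0 : ℝ) 1)
    (hθM : θ < 2 * p / M)
    (hmeas : ∀ t, Measurable[ℱ t] (xs t))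
    (hstep_int : ∀ t, Integrable (fun ω => xs (t + 1) ω - xs t ω) μ)
    (hstep_sq_int : ∀ t, Integrable (fun ω => ‖xs (t + 1) ω - xs t ω‖ ^ 2) μ)
    (hmean : ∀ t,
      μ[(fun ω => xs (t + 1) ω - xs t ω) | ℱ t]
        =ᵐ[μ] fun ω => (-θ) • gradient F (xs t ω))
    (hsec : ∀ t, ∀ᵐ ω ∂μ,
      (μ[(fun ω => ‖xs (t + 1) ω - xs t ω‖ ^ 2) | ℱ t]) ω
        ≤ θ ^ 2 / p * ‖gradient F (xs t ω)‖ ^ 2 + c)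
    (T : ℕ) :
    ∑ t ∈ Finset.range (T + 1), ∫ ω, ‖gradient F (xs t ω)‖ ^ 2 ∂μ
      ≤ (2 * p * (F x₀ - Fstar) + M * p * c * (T + 1)) / (2 * p * θ - M * θ ^ 2) := by
  obtain ⟨hθ0, -⟩ := hθ
  obtain ⟨hp0, -⟩ := hp
  have hM : 0 < M := by
    by_contra! hM
    exact hθM.not_ge ((div_nonpos_of_nonneg_of_nonpos (by positivity) hM).trans hθ0.le)
  have hMθ : M * θ < 2 * p := by rwa [lt_div_iff₀ hM, mul_comm] at hθM
  have hK : (M.toNNReal : ℝ) = M := Real.coe_toNNReal M hM.le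
  have hx : ∀ t, StronglyMeasurable[ℱ t] (xs t) := fun t ↦ (hmeas t).stronglyMeasurable
  have hx' : ∀ t, AEStronglyMeasurable (xs t) μ :=
    fun t ↦ ((hx t).mono (hℱ t)).aestronglyMeasurable
  have hint := integrable_norm_gradient_sq_and_comp_of_steps hF hLip hbd hx' (by simp [hx0])
    (by simp [hx0]) hstep_sq_int
  set G := fun t ↦ ∫ ω, ‖gradient F (xs t ω)‖ ^ 2 ∂μ
  set A := fun t ↦ ∫ ω, F (xs t ω) ∂μ
  have hdescent : ∀ t, (2 * p * θ - M * θ ^ 2) * G t ≤ 2 * p * A t - 2 * p * A (t + 1)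
      + M * p * c := by
    intro t
    have hA := integral_comp_le_of_condExp hF hLip (hℱ t) (hx t) (hx' (t + 1)) (hint t).2
      (hint (t + 1)).2 (hint t).1 (hstep_int t) (hstep_sq_int t) (hmean t) (hsec t)
    rw [hK] at hA
    have hscale : 2 * p * (A t - θ * G t + M / 2 * (θ ^ 2 / p * G t + c))
        = 2 * p * A t - (2 * p * θ - M * θ ^ 2) * G t + M * p * c := by
      field_simp
      ring
    linarith [mul_le_mul_of_nonneg_left hA (by positivity : (0 : ℝ) ≤ 2 * p)]
  have hsum := Finset.sum_range_le_sub_add_of_le_sub_succ hdescent (T + 1)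
  have hA0 : A 0 = F x₀ := by simp [A, hx0]
  have hAT : Fstar ≤ A (T + 1) := by
    simpa using integral_mono (integrable_const Fstar) (hint (T + 1)).2 fun ω ↦ hbd _
  rw [← Finset.mul_sum, hA0] at hsum
  have hrate : 0 < 2 * p * θ - M * θ ^ 2 := by nlinarith
  rw [le_div_iff₀ hrate, mul_comm]
  push_cast at hsum
  linarith [mul_le_mul_of_nonneg_left hAT (by positivity : (0 : ℝ) ≤ 2 * p)]

/-- telescoped gradient-norm bound.  For an `M`-smooth `F` bounded below by
`Fstar`, and a process `x_{t+1} = x_t + s_t` whose steps satisfy, conditionally on the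
σ-algebra `ℱ t` (with `x_t` being `ℱ t`-measurable), `E[s_t | ℱ t] = −θ∇F(x_t)` and
`E[‖s_t‖² | ℱ t] ≤ (θ²/p)‖∇F(x_t)‖² + c`, with `θ ∈ (0,1]`, `p ∈ (0,1]`, `c ≥ 0`,
`θ < 2p/M`, one has
`Σ_{t=0}^{T} E‖∇F(x_t)‖² ≤ (2p(F(x₀) − Fstar) + Mpc(T+1)) / (2pθ − Mθ²)`. -/
theorem sdm_dsgd_telescoped_bound {D : ℕ} (F : EuclideanSpace ℝ (Fin D) → ℝ)
    (M Fstar : ℝ)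
    (hF : Differentiable ℝ F) (hLip : LipschitzWith M.toNNReal (gradient F))
    (hbd : ∀ y, Fstar ≤ F y)
    {Ω : Type} [mΩ : MeasurableSpace Ω] (μ : Measure Ω) [IsProbabilityMeasure μ]
    (ℱ : ℕ → MeasurableSpace Ω) (hℱ : ∀ t, ℱ t ≤ mΩ)
    (xs : ℕ → Ω → EuclideanSpace ℝ (Fin D))
    (x₀ : EuclideanSpace ℝ (Fin D)) (hx0 : ∀ ω, xs 0 ω = x₀)
    (θ p c : ℝ) (hθ : θ ∈ Set.Ioc (0 : ℝ) 1) (hp : p ∈ Set.Ioc (0 : ℝ) 1) (hc : 0 ≤ c)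
    (hθM : θ < 2 * p / M)
    (hmeas : ∀ t, Measurable[ℱ t] (xs t))
    (hstep_int : ∀ t, Integrable (fun ω => xs (t + 1) ω - xs t ω) μ)
    (hstep_sq_int : ∀ t, Integrable (fun ω => ‖xs (t + 1) ω - xs t ω‖ ^ 2) μ)
    (hmean : ∀ t,
      μ[(fun ω => xs (t + 1) ω - xs t ω) | ℱ t]
        =ᵐ[μ] fun ω => (-θ) • gradient F (xs t ω))
    (hsec : ∀ t, ∀ᵐ ω ∂μ,
      (μ[(fun ω => ‖xs (t + 1) ω - xs t ω‖ ^ 2) | ℱ t]) ω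
        ≤ θ ^ 2 / p * ‖gradient F (xs t ω)‖ ^ 2 + c)
    (T : ℕ) :
    ∑ t ∈ Finset.range (T + 1), ∫ ω, ‖gradient F (xs t ω)‖ ^ 2 ∂μ
      ≤ (2 * p * (F x₀ - Fstar) + M * p * c * (T + 1)) / (2 * p * θ - M * θ ^ 2) :=
  sdm_dsgd_telescoped_bound_general F M Fstar hF hLip hbd (mΩ := mΩ) μ ℱ hℱ xs x₀ hx0 θ p c hθ hp
    hθM hmeas hstep_int hstep_sq_int hmean hsec T
end

section
/- Let f : ℝ^D → ℝ be differentiable with L-Lipschitz gradient, let x ∈ ℝ^D, let s ∈ (0, 1/L], and let ĝ be a random vector in ℝ^D with E[ĝ] = ḡ and E[‖ĝ − ḡ‖₂²] ≤ v. Then the biased stochastic-gradient step satisfies E[f(x − s·ĝ)] ≤ f(x) − (s/2)·‖∇f(x)‖₂² + (s/2)·‖ḡ − ∇f(x)‖₂² + (L·s²/2)·v. -/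
open MeasureTheory Set
open scoped NNReal RealInnerProductSpace

/-! Since `∇f` is `L`-Lipschitz, `f y` lies within `L/2 ‖y - x‖²` of its linearization at `x`.
The upper bound at `y = x - s ĝ`, averaged, gives
`E f(x - s ĝ) ≤ f x - s ⟪∇f x, ḡ⟫ + L s²/2 (E‖ĝ - ḡ‖² + ‖ḡ‖²)`, and the two-sided bound makes
`f (x - s ĝ)` integrable. Expanding `‖ḡ - ∇f x‖²`, the claim reduces to `L s² ‖ḡ‖² ≤ s ‖ḡ‖²`,
i.e. to `s ≤ 1/L`. -/

variable {E : Type*} [NormedAddCommGroup E] [InnerProductSpace ℝ E] [CompleteSpace E]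
  {Ω : Type*} [MeasurableSpace Ω] {μ : Measure Ω}

theorem abs_sub_sub_inner_gradient_le {f : E → ℝ} {K : ℝ≥0} (hf : Differentiable ℝ f)
    (hK : LipschitzWith K (gradient f)) (x y : E) :
    |f y - f x - ⟪gradient f x, y - x⟫| ≤ K / 2 * ‖y - x‖ ^ 2 := by
  set d := y - x
  let φ : ℝ → ℝ := fun t => f (x + t • d) - f x - t * ⟪gradient f x, d⟫
  have hφ : ∀ t, HasDerivAt φ ⟪gradient f (x + t • d) - gradient f x, d⟫ t := by
    intro t
    have hline : HasDerivAt (fun t : ℝ => x + t • d) d t := by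
      simpa using ((hasDerivAt_id t).smul_const d).const_add x
    have hcomp := (hf (x + t • d)).hasGradientAt.hasFDerivAt.comp_hasDerivAt t hline
    rw [InnerProductSpace.toDual_apply_apply] at hcomp
    rw [inner_sub_left]
    exact (hcomp.sub_const (f x)).sub
      (by simpa using (hasDerivAt_id t).mul_const ⟪gradient f x, d⟫)
  have hB : ∀ t, HasDerivAt (fun t => K / 2 * t ^ 2 * ‖d‖ ^ 2) (K * t * ‖d‖ ^ 2) t := fun t =>
    (((hasDerivAt_pow 2 t).const_mul (K / 2 : ℝ)).mul_const (‖d‖ ^ 2)).congr_deriv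
      (by push_cast; ring)
  have hbound : ∀ t ∈ Ico (0 : ℝ) 1,
      ‖⟪gradient f (x + t • d) - gradient f x, d⟫‖ ≤ K * t * ‖d‖ ^ 2 := by
    rintro t ⟨ht, -⟩
    have hlip : ‖gradient f (x + t • d) - gradient f x‖ ≤ K * (t * ‖d‖) := by
      simpa [dist_eq_norm, norm_smul, abs_of_nonneg ht] using hK.dist_le_mul (x + t • d) x
    calc ‖⟪gradient f (x + t • d) - gradient f x, d⟫‖
        ≤ ‖gradient f (x + t • d) - gradient f x‖ * ‖d‖ := norm_inner_le_norm _ _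
      _ ≤ K * (t * ‖d‖) * ‖d‖ := by gcongr
      _ = K * t * ‖d‖ ^ 2 := by ring
  have := image_norm_le_of_norm_deriv_right_le_deriv_boundary
    (fun t _ => (hφ t).continuousAt.continuousWithinAt) (fun t _ => (hφ t).hasDerivWithinAt)
    (by simp [φ]) hB hbound (right_mem_Icc.mpr zero_le_one)
  simpa [φ, d] using this

theorem abs_apply_sub_smul_sub_le {f : E → ℝ} {K : ℝ≥0} (hf : Differentiable ℝ f)
    (hK : LipschitzWith K (gradient f)) (x v : E) (s : ℝ) :
    |f (x - s • v) - (f x - s * ⟪gradient f x, v⟫)| ≤ K * s ^ 2 / 2 * ‖v‖ ^ 2 := by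
  have h := abs_sub_sub_inner_gradient_le hf hK x (x - s • v)
  rw [sub_sub_cancel_left, inner_neg_right, real_inner_smul_right, norm_neg, norm_smul,
    Real.norm_eq_abs, mul_pow, sq_abs] at h
  calc |f (x - s • v) - (f x - s * ⟪gradient f x, v⟫)|
      = |f (x - s • v) - f x - -(s * ⟪gradient f x, v⟫)| := by congr 1; ring
    _ ≤ K * s ^ 2 / 2 * ‖v‖ ^ 2 := by linarith

theorem integrable_norm_sq_of_integrable_norm_sub_sq [IsFiniteMeasure μ]
    {F : Type*} [NormedAddCommGroup F] {X : Ω → F} {c : F} (hX : AEStronglyMeasurable X μ)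
    (h : Integrable (fun ω => ‖X ω - c‖ ^ 2) μ) : Integrable (fun ω => ‖X ω‖ ^ 2) μ := by
  have hc : MemLp (fun ω => X ω - c) 2 μ :=
    (memLp_two_iff_integrable_sq_norm (hX.sub aestronglyMeasurable_const)).mpr h
  have hX2 : MemLp X 2 μ := by
    simpa only [Pi.add_def, sub_add_cancel] using hc.add (memLp_const c)
  exact (memLp_two_iff_integrable_sq_norm hX).mp hX2

theorem integral_norm_sq_eq_integral_norm_sub_sq_add [IsProbabilityMeasure μ] {X : Ω → E}
    (hX : Integrable X μ) (h : Integrable (fun ω => ‖X ω - ∫ ω', X ω' ∂μ‖ ^ 2) μ) :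
    ∫ ω, ‖X ω‖ ^ 2 ∂μ = ∫ ω, ‖X ω - ∫ ω', X ω' ∂μ‖ ^ 2 ∂μ + ‖∫ ω, X ω ∂μ‖ ^ 2 := by
  set m := ∫ ω, X ω ∂μ
  have hexpand : ∀ ω, ‖X ω‖ ^ 2 = ‖X ω - m‖ ^ 2 + (2 * ⟪m, X ω⟫ - ‖m‖ ^ 2) := by
    intro ω
    rw [norm_sub_sq_real, real_inner_comm]
    ring
  have hlin : Integrable (fun ω => 2 * ⟪m, X ω⟫) μ := (hX.const_inner m).const_mul 2
  have hcross : Integrable (fun ω => 2 * ⟪m, X ω⟫ - ‖m‖ ^ 2) μ := hlin.sub (integrable_const _)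
  simp only [hexpand]
  rw [integral_add h hcross, integral_sub hlin (integrable_const _),
    integral_const_mul, integral_inner hX, real_inner_self_eq_norm_sq]
  simp only [integral_const, probReal_univ, one_smul]
  ring

theorem integral_apply_sub_smul_le [IsProbabilityMeasure μ] {f : E → ℝ} {K : ℝ≥0}
    (hf : Differentiable ℝ f) (hK : LipschitzWith K (gradient f)) (x : E) (s : ℝ) {X : Ω → E}
    (hX : Integrable X μ) (hX2 : Integrable (fun ω => ‖X ω‖ ^ 2) μ) :
    ∫ ω, f (x - s • X ω) ∂μ
      ≤ f x - s * ⟪gradient f x, ∫ ω, X ω ∂μ⟫ + K * s ^ 2 / 2 * ∫ ω, ‖X ω‖ ^ 2 ∂μ := by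
  have hlin : Integrable (fun ω => f x - s * ⟪gradient f x, X ω⟫) μ :=
    (integrable_const _).sub ((hX.const_inner _).const_mul s)
  have hquad : Integrable (fun ω => K * s ^ 2 / 2 * ‖X ω‖ ^ 2) μ := hX2.const_mul _
  have hbound := fun ω => abs_apply_sub_smul_sub_le hf hK x (X ω) s
  have herr : Integrable (fun ω => f (x - s • X ω) - (f x - s * ⟪gradient f x, X ω⟫)) μ :=
    hquad.mono' ((hf.continuous.comp_aestronglyMeasurable
      (aestronglyMeasurable_const.sub (hX.aestronglyMeasurable.const_smul s))).sub
        hlin.aestronglyMeasurable) (ae_of_all _ hbound)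
  calc ∫ ω, f (x - s • X ω) ∂μ
      ≤ ∫ ω, (f x - s * ⟪gradient f x, X ω⟫ + K * s ^ 2 / 2 * ‖X ω‖ ^ 2) ∂μ :=
        integral_mono (by simpa only [Pi.add_def, sub_add_cancel] using herr.add hlin)
          (hlin.add hquad) fun ω => by linarith [(abs_le.mp (hbound ω)).2]
    _ = f x - s * ⟪gradient f x, ∫ ω, X ω ∂μ⟫ + K * s ^ 2 / 2 * ∫ ω, ‖X ω‖ ^ 2 ∂μ := by
        rw [integral_add hlin hquad, integral_sub (integrable_const _)
          ((hX.const_inner _).const_mul s), integral_const_mul, integral_const_mul,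
          integral_inner hX]
        simp

/-- biased stochastic-gradient descent estimate.  For `f` with
`L`-Lipschitz gradient, step size `s ∈ (0, 1/L]`, and a random direction `ĝ` with mean
`gbar` and variance at most `v`,
`E[f(x − s·ĝ)] ≤ f(x) − (s/2)‖∇f(x)‖² + (s/2)‖gbar − ∇f(x)‖² + (Ls²/2)·v`. -/
theorem biased_sgd_descent {D : ℕ} (f : EuclideanSpace ℝ (Fin D) → ℝ) (L : ℝ)
    (hf : Differentiable ℝ f) (hLip : LipschitzWith L.toNNReal (gradient f))
    (x : EuclideanSpace ℝ (Fin D)) (s : ℝ) (hs : s ∈ Set.Ioc (0 : ℝ) (1 / L))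
    {Ω : Type} [MeasurableSpace Ω] (μ : Measure Ω) [IsProbabilityMeasure μ]
    (ghat : Ω → EuclideanSpace ℝ (Fin D)) (gbar : EuclideanSpace ℝ (Fin D)) (v : ℝ)
    (hint : Integrable ghat μ) (hsq : Integrable (fun ω => ‖ghat ω - gbar‖ ^ 2) μ)
    (hmean : ∫ ω, ghat ω ∂μ = gbar)
    (hvar : ∫ ω, ‖ghat ω - gbar‖ ^ 2 ∂μ ≤ v) :
    ∫ ω, f (x - s • ghat ω) ∂μ
      ≤ f x - s / 2 * ‖gradient f x‖ ^ 2 + s / 2 * ‖gbar - gradient f x‖ ^ 2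
          + L * s ^ 2 / 2 * v := by
  obtain ⟨hs0, hsL⟩ := hs
  have hL : 0 < L := one_div_pos.mp (hs0.trans_le hsL)
  have hLs : L * s ≤ 1 := by rwa [le_div_iff₀ hL, mul_comm] at hsL
  subst hmean
  have hstep := integral_apply_sub_smul_le hf hLip x s hint
    (integrable_norm_sq_of_integrable_norm_sub_sq hint.aestronglyMeasurable hsq)
  rw [Real.coe_toNNReal L hL.le, integral_norm_sq_eq_integral_norm_sub_sq_add hint hsq] at hstep
  have hbias := norm_sub_sq_real (∫ ω, ghat ω ∂μ) (gradient f x)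
  rw [real_inner_comm] at hbias
  nlinarith [mul_le_mul_of_nonneg_left hvar (by positivity : 0 ≤ L * s ^ 2 / 2),
    mul_le_mul_of_nonneg_right hLs (by positivity : 0 ≤ s * ‖∫ ω, ghat ω ∂μ‖ ^ 2)]
end

section
/- Let μ, ν ∈ ℝ, σ > 0, and α > 1. Then the Rényi divergence of order α between the Gaussian distributions N(μ, σ²) and N(ν, σ²) on ℝ equals α·(μ − ν)²/(2σ²). -/
open MeasureTheory ProbabilityTheory
open scoped ENNReal NNReal

/-- the Rényi divergence of order `α > 1` between `N(μ, σ²)` and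
`N(ν, σ²)` equals `α(μ − ν)²/(2σ²)`, where the Rényi divergence is
`(1/(α−1))·log ∫ (dP/dQ)^α dQ`. -/
theorem renyi_divergence_gaussian (μ ν σ α : ℝ) (hσ : 0 < σ) (hα : 1 < α) :
    (1 / (α - 1)) *
        Real.log (∫ x,
          ((gaussianReal μ (Real.toNNReal (σ ^ 2))).rnDeriv
              (gaussianReal ν (Real.toNNReal (σ ^ 2))) x).toReal ^ α
          ∂(gaussianReal ν (Real.toNNReal (σ ^ 2))))
      = α * (μ - ν) ^ 2 / (2 * σ ^ 2) := by
  set v : NNReal := Real.toNNReal (σ ^ 2) with hv_def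
  have hσ2 : (0:ℝ) < σ ^ 2 := by positivity
  have hvr : ((v : ℝ)) = σ ^ 2 := Real.coe_toNNReal _ hσ2.le
  have hv : v ≠ 0 := by
    simp only [hv_def, ne_eq, Real.toNNReal_eq_zero, not_le]
    exact hσ2
  set f : ℝ → ℝ := fun x => gaussianPDFReal μ v x / gaussianPDFReal ν v x with hf_def
  have hf_nonneg : ∀ x, 0 ≤ f x := fun x =>
    div_nonneg (gaussianPDFReal_nonneg _ _ _) (gaussianPDFReal_nonneg _ _ _)
  have hf_meas : Measurable f :=
    (measurable_gaussianPDFReal μ v).div (measurable_gaussianPDFReal ν v)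
  -- Step 1: withDensity identity
  have hwd : (gaussianReal ν v).withDensity (fun x => ENNReal.ofReal (f x))
      = gaussianReal μ v := by
    rw [gaussianReal_of_var_ne_zero _ hv, gaussianReal_of_var_ne_zero μ hv,
      ← withDensity_mul volume (measurable_gaussianPDF ν v) hf_meas.ennreal_ofReal]
    congr 1
    ext x
    simp only [Pi.mul_apply, gaussianPDF]
    rw [← ENNReal.ofReal_mul (gaussianPDFReal_nonneg _ _ _)]
    congr 1
    rw [hf_def]
    field_simp [(gaussianPDFReal_pos ν v x hv).ne']
  -- Step 2: rnDeriv
  have hrn : (gaussianReal μ v).rnDeriv (gaussianReal ν v)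
      =ᵐ[gaussianReal ν v] fun x => ENNReal.ofReal (f x) := by
    rw [← hwd]
    exact Measure.rnDeriv_withDensity _ hf_meas.ennreal_ofReal
  have hint_congr : ∫ x, ((gaussianReal μ v).rnDeriv (gaussianReal ν v) x).toReal ^ α
      ∂(gaussianReal ν v) = ∫ x, f x ^ α ∂(gaussianReal ν v) := by
    refine integral_congr_ae ?_
    filter_upwards [hrn] with x hx
    rw [hx, ENNReal.toReal_ofReal (hf_nonneg x)]
  -- Step 3: integral against pdf
  have hQ : gaussianReal ν v = volume.withDensity
      (fun x => ((gaussianPDFReal ν v x).toNNReal : ℝ≥0∞)) := by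
    rw [gaussianReal_of_var_ne_zero _ hv]; rfl
  have hint2 : ∫ x, f x ^ α ∂(gaussianReal ν v)
      = ∫ x, gaussianPDFReal ν v x * f x ^ α := by
    rw [hQ, integral_withDensity_eq_integral_smul
      ((measurable_gaussianPDFReal ν v).real_toNNReal)]
    refine integral_congr_ae (ae_of_all _ fun x => ?_)
    simp only [NNReal.smul_def, Real.coe_toNNReal _ (gaussianPDFReal_nonneg ν v x),
      smul_eq_mul]
  -- Step 4: pointwise computation
  set C : ℝ := α * (α - 1) * (μ - ν) ^ 2 / (2 * σ ^ 2) with hC_def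
  have hpt : ∀ x, gaussianPDFReal ν v x * f x ^ α
      = Real.exp C * gaussianPDFReal (ν + α * (μ - ν)) v x := by
    intro x
    have hc : (0:ℝ) < (Real.sqrt (2 * Real.pi * v))⁻¹ := by
      rw [hvr]; positivity
    have hfx : f x = Real.exp ((- (x - μ)^2 / (2 * v)) - (- (x - ν)^2 / (2 * v))) := by
      rw [hf_def]
      simp only [gaussianPDFReal]
      rw [mul_div_mul_left _ _ hc.ne', Real.exp_sub]
    have hfpow : f x ^ α
        = Real.exp (((- (x - μ)^2 / (2 * v)) - (- (x - ν)^2 / (2 * v))) * α) := by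
      rw [hfx, ← Real.exp_log (Real.exp_pos _), Real.log_exp,
        Real.rpow_def_of_pos (Real.exp_pos _), Real.log_exp]
    have hE : -(x - ν) ^ 2 / (2 * (v:ℝ)) + (-(x - μ) ^ 2 / (2 * (v:ℝ))
          - -(x - ν) ^ 2 / (2 * (v:ℝ))) * α
        = -(x - (ν + α * (μ - ν))) ^ 2 / (2 * (v:ℝ)) + C := by
      rw [hvr, hC_def]
      field_simp
      ring
    rw [hfpow]
    simp only [gaussianPDFReal]
    rw [mul_assoc, ← Real.exp_add, mul_comm (Real.exp C), hE, Real.exp_add, ← mul_assoc]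
  have hint3 : ∫ x, gaussianPDFReal ν v x * f x ^ α = Real.exp C := by
    simp_rw [hpt]
    rw [integral_const_mul, integral_gaussianPDFReal_eq_one _ hv, mul_one]
  rw [hint_congr, hint2, hint3, Real.log_exp, hC_def]
  have hα1 : α - 1 ≠ 0 := sub_ne_zero.mpr hα.ne'
  field_simp
end
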